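/- Let f : ℝ^d → ℝ be measurable, let p ∈ (0,1), ε ≥ 0, and set p̲ = Φ(Φ⁻¹(p) − ε/σ), so p̲ ∈ (0,1). Then for every x ∈ ℝ^d, every y ∈ ℝ with P[f(x + G) ≤ y] ≤ p̲, and every δ ∈ ℝ^d with ‖δ‖₂ ≤ ε: P[f(x + δ + G) ≤ y] ≤ p. -/

import Mathlib

open MeasureTheory ProbabilityTheory

/-- CDF of the standard one-dimensional Gaussian `N(0,1)`. -/
noncomputable def Phi (t : ℝ) : ℝ := ((gaussianReal 0 1) (Set.Iic t)).toReal

/-- Inverse of the standard Gaussian CDF (a genuine inverse on `(0,1)`). -/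
noncomputable def PhiInv : ℝ → ℝ := Function.invFun Phi

/-- The Gaussian measure `N(0, σ²I)` on `ℝ^d`, i.e. the `d`-fold product of the
one-dimensional centered Gaussian of variance `σ²`, carried to Euclidean space. -/
noncomputable def gaussPi (d : ℕ) (σ : ℝ) : Measure (EuclideanSpace ℝ (Fin d)) :=
  Measure.map (MeasurableEquiv.toLp 2 (Fin d → ℝ))
    (Measure.pi fun _ : Fin d => gaussianReal 0 (σ.toNNReal ^ 2))

/-!
By rotation invariance of `N(0, σ²I)` we may assume that `δ = -‖δ‖ e₀` moves only the first
coordinate. Relative to `N(0, σ²I)`, the shifted Gaussian then has the density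
`exp ((m s - m² / 2) / σ²)` in the first coordinate `s`, with `m = -‖δ‖ ≤ 0`; it is antitone in
`s`, so by the Neyman–Pearson argument the half-space `{s ≤ t}` has the largest shifted mass among
all sets of the same unshifted mass. Both masses of this half-space are values of `Φ`, which
gives the bound.
-/

open Set Real
open scoped NNReal ENNReal

lemma Phi_eq_cdf : Phi = cdf (gaussianReal 0 1) := by
  funext t
  rw [Phi, cdf_eq_real, measureReal_def]

lemma continuous_cdf (μ : Measure ℝ) [IsProbabilityMeasure μ] [NullSingletonClass μ] :
    Continuous (cdf μ) := by
  refine continuous_iff_continuousAt.2 fun x ↦ continuousAt_iff_continuous_left_right.2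
    ⟨?_, (cdf μ).right_continuous x⟩
  rw [← continuousWithinAt_Iio_iff_Iic, (monotone_cdf μ).continuousWithinAt_Iio_iff_leftLim_eq]
  have h := (cdf μ).measure_singleton x
  rw [measure_cdf, measure_singleton, eq_comm, ENNReal.ofReal_eq_zero, sub_nonpos] at h
  exact le_antisymm ((monotone_cdf μ).leftLim_le le_rfl) h

lemma monotone_Phi : Monotone Phi := Phi_eq_cdf ▸ monotone_cdf _

lemma Phi_PhiInv {q : ℝ} (h0 : 0 < q) (h1 : q < 1) : Phi (PhiInv q) = q := by
  refine Function.invFun_eq (mem_range_of_exists_le_of_exists_ge ?_ ?_ ?_)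
  all_goals rw [Phi_eq_cdf]
  · have := nullSingletonClass_gaussianReal (μ := 0) one_ne_zero
    exact continuous_cdf _
  · exact ((tendsto_cdf_atBot _).eventually_le_const h0).exists
  · exact ((tendsto_cdf_atTop _).eventually_const_le h1).exists

lemma gaussianReal_Iic {σ : ℝ} (hσ : 0 < σ) (m s : ℝ) :
    gaussianReal m (σ.toNNReal ^ 2) (Iic s) = ENNReal.ofReal (Phi ((s - m) / σ)) := by
  have hmap :
      ((gaussianReal 0 1).map (σ * ·)).map (· + m) = gaussianReal m (σ.toNNReal ^ 2) := by
    rw [gaussianReal_map_const_mul, gaussianReal_map_add_const, mul_zero, zero_add, mul_one]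
    congr 1
    ext1
    simp [hσ.le]
  rw [← hmap, Measure.map_map (by fun_prop) (by fun_prop),
    Measure.map_apply (by fun_prop) measurableSet_Iic, Phi,
    ENNReal.ofReal_toReal (measure_ne_top _ _)]
  congr 1
  ext x
  simp [le_div_iff₀ hσ, mul_comm, le_sub_iff_add_le]

lemma gaussianReal_eq_withDensity (m : ℝ) {v : ℝ≥0} (hv : v ≠ 0) :
    gaussianReal m v = (gaussianReal 0 v).withDensity
      fun s ↦ ENNReal.ofReal (exp ((m * s - m ^ 2 / 2) / v)) := by
  rw [gaussianReal_of_var_ne_zero _ hv, gaussianReal_of_var_ne_zero _ hv,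
    ← withDensity_mul _ (measurable_gaussianPDF _ _) (by fun_prop)]
  congr 1
  funext s
  rw [Pi.mul_apply, gaussianPDF, gaussianPDF, ← ENNReal.ofReal_mul (gaussianPDFReal_nonneg _ _ _),
    gaussianPDFReal, gaussianPDFReal, mul_assoc _ (rexp _), ← exp_add]
  congr 3
  have : (v : ℝ) ≠ 0 := by exact_mod_cast hv
  field_simp
  ring

lemma withDensity_apply_le_of_measure_le {α : Type*} [MeasurableSpace α] {P : Measure α}
    [IsFiniteMeasure P] {κ : α → ℝ≥0∞} {C H : Set α} (hC : MeasurableSet C)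
    (hH : MeasurableSet H) (hCH : P C ≤ P H) {k : ℝ≥0∞}
    (hH_ge : ∀ v ∈ H, k ≤ κ v) (hH_le : ∀ v ∉ H, κ v ≤ k) :
    P.withDensity κ C ≤ P.withDensity κ H := by
  have hdiff : P (C \ H) ≤ P (H \ C) := by
    rw [← measure_sdiff_add_inter C hH, ← measure_sdiff_add_inter H hC, inter_comm H C] at hCH
    exact (ENNReal.add_le_add_iff_right (measure_ne_top _ _)).1 hCH
  rw [← measure_sdiff_add_inter C hH, ← measure_sdiff_add_inter H hC, inter_comm H C]
  refine add_le_add ?_ le_rfl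
  calc P.withDensity κ (C \ H)
      ≤ k * P (C \ H) := by
        rw [withDensity_apply _ (hC.diff hH), ← setLIntegral_const]
        exact setLIntegral_mono' (hC.diff hH) fun v hv ↦ hH_le v hv.2
    _ ≤ k * P (H \ C) := by gcongr
    _ ≤ P.withDensity κ (H \ C) := by
        rw [withDensity_apply _ (hH.diff hC), ← setLIntegral_const]
        exact setLIntegral_mono' (hH.diff hC) fun v hv ↦ hH_ge v hv.1

lemma gaussianReal_prod_apply_le {β : Type*} [MeasurableSpace β] (μ : Measure β)
    [IsProbabilityMeasure μ] {v : ℝ≥0} (hv : v ≠ 0) {m : ℝ} (hm : m ≤ 0)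
    {C : Set (ℝ × β)} (hC : MeasurableSet C) {t : ℝ}
    (h : (gaussianReal 0 v).prod μ C ≤ gaussianReal 0 v (Iic t)) :
    (gaussianReal m v).prod μ C ≤ gaussianReal m v (Iic t) := by
  set L : ℝ → ℝ≥0∞ := fun s ↦ ENNReal.ofReal (exp ((m * s - m ^ 2 / 2) / v))
  have hL : Antitone L := fun a b hab ↦ ENNReal.ofReal_le_ofReal <| exp_le_exp.2 <|
    div_le_div_of_nonneg_right (by nlinarith) v.2
  have hH : MeasurableSet (Iic t ×ˢ (univ : Set β)) := measurableSet_Iic.prod .univ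
  rw [gaussianReal_eq_withDensity m hv, prod_withDensity_left (by fun_prop)]
  calc ((gaussianReal 0 v).prod μ).withDensity (fun z ↦ L z.1) C
      ≤ ((gaussianReal 0 v).prod μ).withDensity (fun z ↦ L z.1) (Iic t ×ˢ univ) := by
        refine withDensity_apply_le_of_measure_le hC hH ?_ (k := L t)
          (fun z hz ↦ hL hz.1) (fun z hz ↦ hL (not_le.1 (fun h ↦ hz ⟨h, trivial⟩)).le)
        rwa [Measure.prod_prod, measure_univ, mul_one]
    _ = (gaussianReal 0 v).withDensity L (Iic t) := by
        rw [← prod_withDensity_left (by fun_prop), Measure.prod_prod, measure_univ, mul_one]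

instance isProbabilityMeasure_gaussPi (d : ℕ) (σ : ℝ) : IsProbabilityMeasure (gaussPi d σ) :=
  Measure.isProbabilityMeasure_map (by fun_prop)

lemma gaussPi_eq_map_stdGaussian (d : ℕ) {σ : ℝ} (hσ : 0 ≤ σ) :
    gaussPi d σ = (stdGaussian (EuclideanSpace ℝ (Fin d))).map (σ • ·) := by
  have hmp : MeasurePreserving (fun (x : Fin d → ℝ) i ↦ σ * x i)
      (Measure.pi fun _ ↦ gaussianReal 0 1) (Measure.pi fun _ ↦ gaussianReal 0 (σ.toNNReal ^ 2)) :=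
    measurePreserving_pi _ _ fun _ ↦ ⟨by fun_prop, by
      rw [gaussianReal_map_const_mul, mul_zero, mul_one]
      congr 1
      ext1
      simp [hσ]⟩
  rw [gaussPi, ← hmp.map_eq, ← map_pi_eq_stdGaussian, Measure.map_map (by fun_prop) (by fun_prop),
    Measure.map_map (by fun_prop) (by fun_prop)]
  rfl

lemma gaussPi_map_linearIsometryEquiv (d : ℕ) {σ : ℝ} (hσ : 0 ≤ σ)
    (R : EuclideanSpace ℝ (Fin d) ≃ₗᵢ[ℝ] EuclideanSpace ℝ (Fin d)) :
    (gaussPi d σ).map R = gaussPi d σ := by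
  conv_rhs => rw [gaussPi_eq_map_stdGaussian d hσ, ← stdGaussian_map R]
  rw [gaussPi_eq_map_stdGaussian d hσ, Measure.map_map (by fun_prop) (by fun_prop),
    Measure.map_map (by fun_prop) (by fun_prop)]
  congr 1
  funext v
  simp

lemma exists_map_add_eq_map_map_add {E : Type*} [NormedAddCommGroup E] [InnerProductSpace ℝ E]
    [MeasurableSpace E] [BorelSpace E] {μ : Measure E} (hμ : ∀ R : E ≃ₗᵢ[ℝ] E, μ.map R = μ)
    {u δ : E} (h : ‖u‖ = ‖δ‖) :
    ∃ R : E ≃ₗᵢ[ℝ] E, μ.map (· + δ) = (μ.map (· + u)).map R := by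
  set R := (ℝ ∙ (u - δ))ᗮ.reflection
  refine ⟨R, ?_⟩
  have hcomp : (· + δ) = R ∘ (· + u) ∘ R.symm := by
    funext v
    simp [R, Submodule.reflection_sub h]
  rw [hcomp, ← Measure.map_map (by fun_prop) (by fun_prop),
    ← Measure.map_map (by fun_prop) (by fun_prop), hμ]

lemma gaussPi_map_add_single_apply_le (n : ℕ) {σ : ℝ} (hσ : 0 < σ) {m : ℝ} (hm : m ≤ 0)
    {C : Set (EuclideanSpace ℝ (Fin (n + 1)))} (hC : MeasurableSet C) {t : ℝ}
    (h : gaussPi (n + 1) σ C ≤ gaussianReal 0 (σ.toNNReal ^ 2) (Iic t)) :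
    (gaussPi (n + 1) σ).map (· + EuclideanSpace.single 0 m) C ≤
      gaussianReal m (σ.toNNReal ^ 2) (Iic t) := by
  set γ := gaussianReal 0 (σ.toNNReal ^ 2)
  let e := (MeasurableEquiv.toLp 2 (Fin (n + 1) → ℝ)).symm.trans
    (MeasurableEquiv.piFinSuccAbove (fun _ ↦ ℝ) 0)
  have he : MeasurePreserving e (gaussPi (n + 1) σ) (γ.prod (Measure.pi fun _ ↦ γ)) :=
    (MeasurePreserving.symm _ ⟨by fun_prop, rfl⟩).trans (measurePreserving_piFinSuccAbove _ 0)
  have he_add : e ∘ (· + EuclideanSpace.single 0 m) = Prod.map (· + m) id ∘ e := by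
    funext v
    ext j
    · simp [e]
    · simp [e, Fin.tail, Fin.succ_ne_zero]
  have he_shift : MeasurePreserving e ((gaussPi (n + 1) σ).map (· + EuclideanSpace.single 0 m))
      ((gaussianReal m (σ.toNNReal ^ 2)).prod (Measure.pi fun _ ↦ γ)) := by
    refine ⟨e.measurable, ?_⟩
    rw [Measure.map_map (by fun_prop) (by fun_prop), he_add,
      ← Measure.map_map (by fun_prop) (by fun_prop), he.map_eq,
      ← Measure.map_prod_map _ _ (by fun_prop) (by fun_prop), gaussianReal_map_add_const, zero_add,
      Measure.map_id]
  have hσ' : σ.toNNReal ^ 2 ≠ 0 := by positivity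
  have hC' : C = e ⁻¹' (e.symm ⁻¹' C) := by
    rw [← preimage_comp, e.symm_comp_self, preimage_id]
  rw [hC', he.measure_preimage_equiv] at h
  rw [hC', he_shift.measure_preimage_equiv]
  exact gaussianReal_prod_apply_le _ hσ' hm (e.symm.measurable hC) h

lemma gaussPi_map_add_apply_le (d : ℕ) {σ : ℝ} (hσ : 0 < σ) (δ : EuclideanSpace ℝ (Fin d))
    {A : Set (EuclideanSpace ℝ (Fin d))} (hA : MeasurableSet A) {t : ℝ}
    (h : gaussPi d σ A ≤ ENNReal.ofReal (Phi (t / σ))) :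
    (gaussPi d σ).map (· + δ) A ≤ ENNReal.ofReal (Phi ((t + ‖δ‖) / σ)) := by
  cases d with
  | zero => simpa [Subsingleton.elim δ 0] using h
  | succ n =>
    have hu : ‖EuclideanSpace.single (0 : Fin (n + 1)) (-‖δ‖)‖ = ‖δ‖ := by simp
    obtain ⟨R, hR⟩ :=
      exists_map_add_eq_map_map_add (gaussPi_map_linearIsometryEquiv (n + 1) hσ.le) hu
    have hRA : gaussPi (n + 1) σ (R ⁻¹' A) = gaussPi (n + 1) σ A := by
      rw [← Measure.map_apply (by fun_prop) hA, gaussPi_map_linearIsometryEquiv _ hσ.le]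
    rw [hR, Measure.map_apply (by fun_prop) hA, ← sub_neg_eq_add, ← gaussianReal_Iic hσ]
    refine gaussPi_map_add_single_apply_le n hσ (by simp) (hA.preimage (by fun_prop)) ?_
    rwa [hRA, gaussianReal_Iic hσ, sub_zero]

theorem prob_le_of_perturbed_general (d : ℕ) (σ : ℝ) (hσ : 0 < σ)
    (f : EuclideanSpace ℝ (Fin d) → ℝ) (hf : Measurable f)
    (p : ℝ) (hp0 : 0 < p) (hp1 : p < 1) (ε : ℝ)
    (plow : ℝ) (hplow : plow = Phi (PhiInv p - ε / σ)) :
    ∀ x : EuclideanSpace ℝ (Fin d), ∀ y : ℝ,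
      ((gaussPi d σ) {v | f (x + v) ≤ y}).toReal ≤ plow →
      ∀ δ : EuclideanSpace ℝ (Fin d), ‖δ‖ ≤ ε →
        ((gaussPi d σ) {v | f (x + δ + v) ≤ y}).toReal ≤ p := by
  intro x y hA δ hδ
  set A := {v | f (x + v) ≤ y}
  have hAm : MeasurableSet A := measurableSet_le (by fun_prop) measurable_const
  have hA' : gaussPi d σ A ≤ ENNReal.ofReal (Phi ((σ * PhiInv p - ε) / σ)) := by
    rw [show (σ * PhiInv p - ε) / σ = PhiInv p - ε / σ by field_simp, ← hplow,
      ← ENNReal.ofReal_toReal (measure_ne_top _ A)]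
    exact ENNReal.ofReal_le_ofReal hA
  have hp : Phi ((σ * PhiInv p - ε + ‖δ‖) / σ) ≤ p := calc
    Phi ((σ * PhiInv p - ε + ‖δ‖) / σ) ≤ Phi (PhiInv p) := monotone_Phi <| by
      rw [div_le_iff₀ hσ]
      linarith
    _ = p := Phi_PhiInv hp0 hp1
  have hshift : gaussPi d σ {v | f (x + δ + v) ≤ y} = (gaussPi d σ).map (· + δ) A := by
    rw [Measure.map_apply (by fun_prop) hAm]
    simp only [A, preimage_ofPred_eq, add_assoc, add_comm δ]
  rw [hshift]
  exact ENNReal.toReal_le_of_le_ofReal hp0.le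
    ((gaussPi_map_add_apply_le d hσ δ hAm hA').trans (ENNReal.ofReal_le_ofReal hp))

/-- For measurable `f`, `p ∈ (0,1)`, `ε ≥ 0`, and
`p̲ = Φ(Φ⁻¹(p) − ε/σ)`: if `P[f(x + G) ≤ y] ≤ p̲`, then for every `δ` with
`‖δ‖₂ ≤ ε` we have `P[f(x + δ + G) ≤ y] ≤ p`. -/
theorem prob_le_of_perturbed (d : ℕ) (hd : 1 ≤ d) (σ : ℝ) (hσ : 0 < σ)
    (f : EuclideanSpace ℝ (Fin d) → ℝ) (hf : Measurable f)
    (p : ℝ) (hp0 : 0 < p) (hp1 : p < 1) (ε : ℝ) (hε : 0 ≤ ε)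
    (plow : ℝ) (hplow : plow = Phi (PhiInv p - ε / σ)) :
    ∀ x : EuclideanSpace ℝ (Fin d), ∀ y : ℝ,
      ((gaussPi d σ) {v | f (x + v) ≤ y}).toReal ≤ plow →
      ∀ δ : EuclideanSpace ℝ (Fin d), ‖δ‖ ≤ ε →
        ((gaussPi d σ) {v | f (x + δ + v) ≤ y}).toReal ≤ p :=
  prob_le_of_perturbed_general d σ hσ f hf p hp0 hp1 ε plow hplow
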